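/- arXiv:1709.06672 — 2 statements merged into one kernel-verified Lean document; each statement's English description precedes it below -/
import Mathlib

section
/- Let M = (M, TRUE, f_⊥, f_⊤, f_∨, f_∧, f_→, f_□, f_K) be a Heyting algebra with an ultrafilter TRUE and additional unary operations f_□, f_K. Then M is an EL5⁻-model if and only if for all m, m' ∈ M: (a) M has the disjunction property (m ⊔ m' = ⊤ implies m = ⊤ or m' = ⊤); (b) f_□(m) = ⊤ if m = ⊤ and f_□(m) = ⊥ otherwise; (c) f_K(m ⇨ m') ≤ f_K(m) ⇨ f_K(m'); and (d) f_K(⊤) = ⊤. Moreover, M is an EL5-model if and only if in addition (e) f_K(m) ≤ ¬¬m holds for all m ∈ M. -/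
/-- A filter of a Heyting algebra: a nonempty, upward-closed subset closed under meets. -/
def IsHFilter {H : Type*} [HeytingAlgebra H] (F : Set H) : Prop :=
  F.Nonempty ∧ (∀ ⦃a b : H⦄, a ∈ F → a ≤ b → b ∈ F) ∧
    (∀ ⦃a b : H⦄, a ∈ F → b ∈ F → a ⊓ b ∈ F)

/-- A proper filter: a filter which is not the whole algebra. -/
def IsProperHFilter {H : Type*} [HeytingAlgebra H] (F : Set H) : Prop :=
  IsHFilter F ∧ F ≠ Set.univ

/-- A prime filter: a proper filter such that `a ⊔ b ∈ F` implies `a ∈ F` or `b ∈ F`. -/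
def IsPrimeHFilter {H : Type*} [HeytingAlgebra H] (F : Set H) : Prop :=
  IsProperHFilter F ∧ ∀ a b : H, a ⊔ b ∈ F → a ∈ F ∨ b ∈ F

/-- An ultrafilter: a maximal proper filter. -/
def IsUltraHFilter {H : Type*} [HeytingAlgebra H] (F : Set H) : Prop :=
  IsProperHFilter F ∧ ∀ G : Set H, IsProperHFilter G → F ⊆ G → G = F
/-- The raw data of an algebraic model: a Heyting algebra together with a
designated set `TRUE` and unary operations `fbox` (for `□`) and `fK` (for `K`). -/
structure PreModel (M : Type*) [HeytingAlgebra M] where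
  TRUE : Set M
  fbox : M → M
  fK : M → M

/-- An `EL3⁻`-model: `TRUE` is an ultrafilter and the truth conditions (i)–(vi) hold. -/
def IsEL3mModel {M : Type*} [HeytingAlgebra M] (S : PreModel M) : Prop :=
  IsUltraHFilter S.TRUE ∧
  (∀ m m' : M, S.fbox (m ⊔ m') ≤ S.fbox m ⊔ S.fbox m') ∧
  (∀ m : M, S.fbox m ≤ m) ∧
  (∀ m m' : M, S.fbox (m ⇨ m') ≤ S.fbox (S.fbox m ⇨ S.fbox m')) ∧
  (∀ m : M, S.fbox m ∈ S.TRUE ↔ m = ⊤) ∧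
  (∀ m m' : M, S.fK (m ⇨ m') ≤ S.fK m ⇨ S.fK m') ∧
  (∀ m : M, S.fbox m ≤ S.fbox (S.fK m))

/-- An `EL5⁻`-model: an `EL3⁻`-model where `fbox ⊤ = ⊤` and `fbox m = ⊥` for `m ≠ ⊤`. -/
def IsEL5mModel {M : Type*} [HeytingAlgebra M] (S : PreModel M) : Prop :=
  IsEL3mModel S ∧ S.fbox ⊤ = ⊤ ∧ ∀ m : M, m ≠ ⊤ → S.fbox m = ⊥

/-- An `EL5`-model: an `EL5⁻`-model which additionally satisfies `fK m ≤ ¬¬m`. -/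
def IsEL5Model {M : Type*} [HeytingAlgebra M] (S : PreModel M) : Prop :=
  IsEL5mModel S ∧ ∀ m : M, S.fK m ≤ (m ⇨ ⊥) ⇨ ⊥


/-! When `f_□` sends `⊤` to `⊤` and everything else to `⊥`, the box axioms (ii)–(iv) hold as soon
as `TRUE` is a proper filter, while, because `⊥ ≠ ⊤`, axiom (i) says exactly that `⊤` is
join-prime (the disjunction property) and axiom (vi) says exactly that `f_K ⊤ = ⊤`. -/

section TopIndicator

variable {α : Type*}

theorem IsProperHFilter.top_mem [HeytingAlgebra α] {F : Set α} (hF : IsProperHFilter F) :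
    ⊤ ∈ F :=
  let ⟨⟨⟨_, ha⟩, hup, _⟩, _⟩ := hF
  hup ha le_top

theorem IsProperHFilter.bot_notMem [HeytingAlgebra α] {F : Set α} (hF : IsProperHFilter F) :
    ⊥ ∉ F := fun hbot =>
  hF.2 (Set.eq_univ_of_forall fun _ => hF.1.2.1 hbot bot_le)

theorem IsProperHFilter.bot_ne_top [HeytingAlgebra α] {F : Set α} (hF : IsProperHFilter F) :
    (⊥ : α) ≠ ⊤ := fun h =>
  hF.bot_notMem (h ▸ hF.top_mem)

def HasDisjunctionProperty (α : Type*) [Lattice α] [OrderTop α] : Prop :=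
  ∀ a b : α, a ⊔ b = ⊤ → a = ⊤ ∨ b = ⊤

def IsTopIndicator [PartialOrder α] [BoundedOrder α] (f : α → α) : Prop :=
  f ⊤ = ⊤ ∧ ∀ a, a ≠ ⊤ → f a = ⊥

namespace IsTopIndicator

section PartialOrder

variable [PartialOrder α] [BoundedOrder α] {f : α → α}

theorem apply_le (hf : IsTopIndicator f) (a : α) : f a ≤ a := by
  by_cases ha : a = ⊤
  · rw [ha, hf.1]
  · rw [hf.2 a ha]
    exact bot_le

theorem monotone (hf : IsTopIndicator f) : Monotone f := by
  intro a b hab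
  by_cases ha : a = ⊤
  · subst ha
    rw [top_le_iff.1 hab]
  · rw [hf.2 a ha]
    exact bot_le

theorem le_apply_comp_iff (hf : IsTopIndicator f) (hbot : (⊥ : α) ≠ ⊤) (g : α → α) :
    (∀ a, f a ≤ f (g a)) ↔ g ⊤ = ⊤ := by
  refine ⟨fun h => ?_, fun hg a => ?_⟩
  · by_contra hg
    have htop := h ⊤
    rw [hf.1, hf.2 _ hg] at htop
    exact hbot (eq_bot_iff.2 htop).symm
  · by_cases ha : a = ⊤
    · rw [ha, hg]
    · rw [hf.2 a ha]
      exact bot_le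

end PartialOrder

theorem map_sup_le_iff [Lattice α] [BoundedOrder α] {f : α → α} (hf : IsTopIndicator f)
    (hbot : (⊥ : α) ≠ ⊤) :
    (∀ a b, f (a ⊔ b) ≤ f a ⊔ f b) ↔ HasDisjunctionProperty α := by
  refine ⟨fun h a b hab => ?_, fun hdp a b => ?_⟩
  · by_contra! hne
    have htop := h a b
    rw [hab, hf.1, hf.2 a hne.1, hf.2 b hne.2, sup_idem] at htop
    exact hbot (eq_bot_iff.2 htop).symm
  · by_cases hab : a ⊔ b = ⊤
    · rw [hab, hf.1]
      rcases hdp a b hab with ha | hb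
      · rw [ha, hf.1]
        exact le_sup_left
      · rw [hb, hf.1]
        exact le_sup_right
    · rw [hf.2 _ hab]
      exact bot_le

section HeytingAlgebra

variable [HeytingAlgebra α] {f : α → α}

theorem map_himp_le (hf : IsTopIndicator f) (a b : α) : f (a ⇨ b) ≤ f (f a ⇨ f b) := by
  by_cases hab : a ≤ b
  · rw [himp_eq_top_iff.2 (hf.monotone hab)]
    exact hf.monotone le_top
  · rw [hf.2 _ (mt himp_eq_top_iff.1 hab)]
    exact bot_le

theorem apply_mem_iff (hf : IsTopIndicator f) {F : Set α} (hF : IsProperHFilter F) (a : α) :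
    f a ∈ F ↔ a = ⊤ := by
  by_cases ha : a = ⊤
  · simp only [ha, hf.1, hF.top_mem]
  · simp only [hf.2 a ha, hF.bot_notMem, ha]

end HeytingAlgebra

end IsTopIndicator

end TopIndicator

section Model

variable {M : Type*} [HeytingAlgebra M] {S : PreModel M}

theorem isEL3mModel_iff_of_isTopIndicator (hU : IsUltraHFilter S.TRUE)
    (hbox : IsTopIndicator S.fbox) :
    IsEL3mModel S ↔ HasDisjunctionProperty M ∧
      (∀ m m' : M, S.fK (m ⇨ m') ≤ S.fK m ⇨ S.fK m') ∧ S.fK ⊤ = ⊤ := by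
  have hbot := hU.1.bot_ne_top
  constructor
  · rintro ⟨-, hsup, -, -, -, hK, hboxK⟩
    exact ⟨(hbox.map_sup_le_iff hbot).1 hsup, hK, (hbox.le_apply_comp_iff hbot _).1 hboxK⟩
  · rintro ⟨hdp, hK, hKtop⟩
    exact ⟨hU, (hbox.map_sup_le_iff hbot).2 hdp, hbox.apply_le, hbox.map_himp_le,
      hbox.apply_mem_iff hU.1, hK, (hbox.le_apply_comp_iff hbot _).2 hKtop⟩

theorem isEL5mModel_iff (hU : IsUltraHFilter S.TRUE) :
    IsEL5mModel S ↔ HasDisjunctionProperty M ∧ IsTopIndicator S.fbox ∧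
      (∀ m m' : M, S.fK (m ⇨ m') ≤ S.fK m ⇨ S.fK m') ∧ S.fK ⊤ = ⊤ := by
  constructor
  · rintro ⟨hEL3, hbox⟩
    obtain ⟨hdp, hK, hKtop⟩ := (isEL3mModel_iff_of_isTopIndicator hU hbox).1 hEL3
    exact ⟨hdp, hbox, hK, hKtop⟩
  · rintro ⟨hdp, hbox, hK, hKtop⟩
    exact ⟨(isEL3mModel_iff_of_isTopIndicator hU hbox).2 ⟨hdp, hK, hKtop⟩, hbox⟩

end Model

/-- Let `M` be a Heyting algebra with an ultrafilter `TRUE` and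
operations `f_□`, `f_K`.  Then `M` is an `EL5⁻`-model iff (a) `M` has the
disjunction property, (b) `f_□(⊤)=⊤` and `f_□(m)=⊥` for `m ≠ ⊤`, (c)
`f_K(m⇨m') ≤ f_K(m)⇨f_K(m')` and (d) `f_K(⊤)=⊤`; and `M` is an `EL5`-model iff
additionally (e) `f_K(m) ≤ ¬¬m` for all `m`. -/
theorem stmt10 {M : Type*} [HeytingAlgebra M] (S : PreModel M)
    (hU : IsUltraHFilter S.TRUE) :
    (IsEL5mModel S ↔
      ((∀ m m' : M, m ⊔ m' = ⊤ → m = ⊤ ∨ m' = ⊤) ∧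
       (S.fbox ⊤ = ⊤ ∧ ∀ m : M, m ≠ ⊤ → S.fbox m = ⊥) ∧
       (∀ m m' : M, S.fK (m ⇨ m') ≤ S.fK m ⇨ S.fK m') ∧
       S.fK ⊤ = ⊤)) ∧
    (IsEL5Model S ↔
      ((∀ m m' : M, m ⊔ m' = ⊤ → m = ⊤ ∨ m' = ⊤) ∧
       (S.fbox ⊤ = ⊤ ∧ ∀ m : M, m ≠ ⊤ → S.fbox m = ⊥) ∧
       (∀ m m' : M, S.fK (m ⇨ m') ≤ S.fK m ⇨ S.fK m') ∧
       S.fK ⊤ = ⊤ ∧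
       (∀ m : M, S.fK m ≤ (m ⇨ ⊥) ⇨ ⊥))) := by
  have hEL5m := isEL5mModel_iff hU
  refine ⟨hEL5m, ?_⟩
  rw [IsEL5Model, hEL5m]
  simp only [HasDisjunctionProperty, IsTopIndicator, and_assoc]
end

section
/- Let 𝓛 ∈ {EL5⁻, EL5, EkL5⁻, EkL5 | k ∈ {4,5,6}} and let (M,γ) be an algebraic 𝓛-interpretation. Then there exists a relational model K = (F,g) based on an 𝓛-frame such that for all formulas φ ∈ Fm: (M,γ) ⊨ φ if and only if K ⊨ φ. -/
/-- Formulas of the full modal-epistemic language `Fm`. -/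
inductive Fm : Type
  | var : Nat → Fm
  | bot : Fm
  | and : Fm → Fm → Fm
  | or : Fm → Fm → Fm
  | imp : Fm → Fm → Fm
  | box : Fm → Fm
  | k : Fm → Fm

namespace Fm

def neg (φ : Fm) : Fm := φ.imp Fm.bot

def top : Fm := Fm.neg Fm.bot

def biimp (φ ψ : Fm) : Fm := (φ.imp ψ).and (ψ.imp φ)

/-- Propositional identity as strict equivalence: `φ ≡ ψ := □(φ↔ψ)`. -/
def equiv (φ ψ : Fm) : Fm := Fm.box (Fm.biimp φ ψ)

def diam (φ : Fm) : Fm := Fm.neg (Fm.box (Fm.neg φ))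

end Fm

/-- Hilbert-style axiom schemes for intuitionistic propositional logic,
instantiated over the full language (so that together with closure under MP
this yields exactly all substitution-instances of theorems of IPC). -/
inductive IPCAx : Fm → Prop
  | k1 (φ ψ : Fm) : IPCAx (φ.imp (ψ.imp φ))
  | k2 (φ ψ χ : Fm) : IPCAx ((φ.imp (ψ.imp χ)).imp ((φ.imp ψ).imp (φ.imp χ)))
  | andI (φ ψ : Fm) : IPCAx (φ.imp (ψ.imp (φ.and ψ)))
  | andE1 (φ ψ : Fm) : IPCAx ((φ.and ψ).imp φ)
  | andE2 (φ ψ : Fm) : IPCAx ((φ.and ψ).imp ψ)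
  | orI1 (φ ψ : Fm) : IPCAx (φ.imp (φ.or ψ))
  | orI2 (φ ψ : Fm) : IPCAx (ψ.imp (φ.or ψ))
  | orE (φ ψ χ : Fm) : IPCAx ((φ.imp χ).imp ((ψ.imp χ).imp ((φ.or ψ).imp χ)))
  | efq (φ : Fm) : IPCAx (Fm.bot.imp φ)

/-- Scheme (INT): all theorems of IPC and their substitution-instances. -/
inductive IPCThm : Fm → Prop
  | ax {φ : Fm} : IPCAx φ → IPCThm φ
  | mp {φ ψ : Fm} : IPCThm (φ.imp ψ) → IPCThm φ → IPCThm ψ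

/-- A specification of a logic of the hierarchy: all logics contain (INT), (A1),
(A2), (A3); the flags indicate which further axiom schemes are present. -/
structure LogicSpec : Type where
  hasA4 : Prop
  hasA5 : Prop
  hasKBel : Prop
  hasCoRe : Prop
  hasIntRe : Prop
  hasE4 : Prop
  hasE5 : Prop
  hasPNB : Prop
  hasNNB : Prop

/-- The axioms of the logic specified by `S`. -/
inductive IsAxiom (S : LogicSpec) : Fm → Prop
  | int {φ : Fm} : IPCThm φ → IsAxiom S φ
  | a1 (φ ψ : Fm) : IsAxiom S ((Fm.box (φ.or ψ)).imp ((Fm.box φ).or (Fm.box ψ)))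
  | a2 (φ : Fm) : IsAxiom S ((Fm.box φ).imp φ)
  | a3 (φ ψ : Fm) : IsAxiom S ((Fm.box (φ.imp ψ)).imp (Fm.box ((Fm.box φ).imp (Fm.box ψ))))
  | a4 (φ : Fm) : S.hasA4 → IsAxiom S ((Fm.box φ).imp (Fm.box (Fm.box φ)))
  | a5 (φ : Fm) : S.hasA5 → IsAxiom S ((Fm.neg (Fm.box φ)).imp (Fm.box (Fm.neg (Fm.box φ))))
  | kbel (φ ψ : Fm) : S.hasKBel → IsAxiom S ((Fm.k (φ.imp ψ)).imp ((Fm.k φ).imp (Fm.k ψ)))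
  | core (φ : Fm) : S.hasCoRe → IsAxiom S ((Fm.box φ).imp (Fm.box (Fm.k φ)))
  | intre (φ : Fm) : S.hasIntRe → IsAxiom S ((Fm.k φ).imp (Fm.neg (Fm.neg φ)))
  | e4 (φ : Fm) : S.hasE4 → IsAxiom S ((Fm.k φ).imp (Fm.k (Fm.k φ)))
  | e5 (φ : Fm) : S.hasE5 → IsAxiom S ((Fm.neg (Fm.k φ)).imp (Fm.k (Fm.neg (Fm.k φ))))
  | pnb (φ : Fm) : S.hasPNB → IsAxiom S ((Fm.k φ).imp (Fm.box (Fm.k φ)))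
  | nnb (φ : Fm) : S.hasNNB → IsAxiom S ((Fm.neg (Fm.k φ)).imp (Fm.box (Fm.neg (Fm.k φ))))

/-- Derivations from the hypotheses `Φ` over the axiom set `Ax`.  The parameter
`tnd` controls whether instances of the theorem scheme (TND) `φ ∨ ¬φ` may be
used.  The rules are Modus Ponens (MP) and Axiom Necessitation (AN), the latter
applying to axioms only (not to (TND) instances nor to theorems). -/
inductive Deriv (Ax : Fm → Prop) (tnd : Prop) (Φ : Set Fm) : Fm → Prop
  | ax {φ : Fm} : Ax φ → Deriv Ax tnd Φ φ
  | hyp {φ : Fm} : φ ∈ Φ → Deriv Ax tnd Φ φ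
  | tnd (φ : Fm) : tnd → Deriv Ax tnd Φ (φ.or (Fm.neg φ))
  | an {φ : Fm} : Ax φ → Deriv Ax tnd Φ (Fm.box φ)
  | mp {φ ψ : Fm} : Deriv Ax tnd Φ (φ.imp ψ) → Deriv Ax tnd Φ φ → Deriv Ax tnd Φ ψ

/-- `Φ ⊢_S φ`. -/
def Derives (S : LogicSpec) (Φ : Set Fm) (φ : Fm) : Prop := Deriv (IsAxiom S) True Φ φ

/-- `⊢_S φ`. -/
def Thm (S : LogicSpec) (φ : Fm) : Prop := Derives S ∅ φ

/-- The modal logic `Ln` (n ∈ {3,4,5}): (INT)+(A1)+(A2)+(A3), plus (A4) if n ≥ 4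
and (A5) if n ≥ 5. -/
def Lspec (n : Nat) : LogicSpec :=
  ⟨4 ≤ n, 5 ≤ n, False, False, False, False, False, False, False⟩

/-- `ELn⁻ = Ln + (KBel) + (CoRe)`. -/
def ELmSpec (n : Nat) : LogicSpec :=
  ⟨4 ≤ n, 5 ≤ n, True, True, False, False, False, False, False⟩

/-- `E4Ln⁻ = ELn⁻ + (E4)`. -/
def E4LmSpec (n : Nat) : LogicSpec := { ELmSpec n with hasE4 := True }

/-- `E5Ln⁻ = E4Ln⁻ + (E5)`. -/
def E5LmSpec (n : Nat) : LogicSpec := { E4LmSpec n with hasE5 := True }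

/-- `E6Ln⁻ = ELn⁻ + (PNB) + (NNB)`. -/
def E6LmSpec (n : Nat) : LogicSpec := { ELmSpec n with hasPNB := True, hasNNB := True }

/-- `ELn = ELn⁻ + (IntRe)`. -/
def ELSpec (n : Nat) : LogicSpec := { ELmSpec n with hasIntRe := True }

def E4LSpec (n : Nat) : LogicSpec := { E4LmSpec n with hasIntRe := True }

def E5LSpec (n : Nat) : LogicSpec := { E5LmSpec n with hasIntRe := True }

def E6LSpec (n : Nat) : LogicSpec := { E6LmSpec n with hasIntRe := True }

/-- Membership in the hierarchy of logics considered in the paper. -/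
def InHierarchy (S : LogicSpec) : Prop :=
  ∃ n, n ∈ ({3, 4, 5} : Set Nat) ∧
    (S = Lspec n ∨ S = ELmSpec n ∨ S = E4LmSpec n ∨ S = E5LmSpec n ∨ S = E6LmSpec n ∨
      S = ELSpec n ∨ S = E4LSpec n ∨ S = E5LSpec n ∨ S = E6LSpec n)

/-- The S5-style logics: `EL5⁻`, `EL5`, `EkL5⁻`, `EkL5` for k ∈ {4,5,6}. -/
def L5Logics : Set LogicSpec :=
  {ELmSpec 5, E4LmSpec 5, E5LmSpec 5, E6LmSpec 5, ELSpec 5, E4LSpec 5, E5LSpec 5, E6LSpec 5}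
/-- Canonical extension of an assignment `γ` to all formulas. -/
def evalFm {M : Type*} [HeytingAlgebra M] (S : PreModel M) (γ : Nat → M) : Fm → M
  | .var n => γ n
  | .bot => ⊥
  | .and φ ψ => evalFm S γ φ ⊓ evalFm S γ ψ
  | .or φ ψ => evalFm S γ φ ⊔ evalFm S γ ψ
  | .imp φ ψ => evalFm S γ φ ⇨ evalFm S γ ψ
  | .box φ => S.fbox (evalFm S γ φ)
  | .k φ => S.fK (evalFm S γ φ)
/-- Algebraic models for the logic specified by `S`: the base conditions of a
model, together with the additional truth conditions corresponding to the axiom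
schemes present in `S`. -/
def IsModelFor (S : LogicSpec) {M : Type*} [HeytingAlgebra M] (Mdl : PreModel M) : Prop :=
  IsUltraHFilter Mdl.TRUE ∧
  (∀ m m' : M, Mdl.fbox (m ⊔ m') ≤ Mdl.fbox m ⊔ Mdl.fbox m') ∧
  (∀ m : M, Mdl.fbox m ≤ m) ∧
  (∀ m m' : M, Mdl.fbox (m ⇨ m') ≤ Mdl.fbox (Mdl.fbox m ⇨ Mdl.fbox m')) ∧
  (∀ m : M, Mdl.fbox m ∈ Mdl.TRUE ↔ m = ⊤) ∧
  (S.hasKBel → ∀ m m' : M, Mdl.fK (m ⇨ m') ≤ Mdl.fK m ⇨ Mdl.fK m') ∧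
  (S.hasCoRe → ∀ m : M, Mdl.fbox m ≤ Mdl.fbox (Mdl.fK m)) ∧
  (S.hasA4 → ∀ m : M, Mdl.fbox m ≤ Mdl.fbox (Mdl.fbox m)) ∧
  (S.hasA5 → Mdl.fbox ⊤ = ⊤ ∧ ∀ m : M, m ≠ ⊤ → Mdl.fbox m = ⊥) ∧
  (S.hasE4 → ∀ m : M, Mdl.fK m ≤ Mdl.fK (Mdl.fK m)) ∧
  (S.hasE5 → ∀ m : M, (Mdl.fK m ⇨ ⊥) ≤ Mdl.fK (Mdl.fK m ⇨ ⊥)) ∧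
  (S.hasPNB → ∀ m : M, Mdl.fK m ≤ Mdl.fbox (Mdl.fK m)) ∧
  (S.hasNNB → ∀ m : M, (Mdl.fK m ⇨ ⊥) ≤ Mdl.fbox (Mdl.fK m ⇨ ⊥)) ∧
  (S.hasIntRe → ∀ m : M, Mdl.fK m ≤ (m ⇨ ⊥) ⇨ ⊥)
/-- The raw data of an intuitionistic general frame: worlds, an accessibility
relation, a set `P` of propositions, a belief function `E` and a bottom world. -/
structure Frame (W : Type*) where
  R : W → W → Prop
  P : Set (Set W)
  E : W → Set (Set W)
  wbot : W

/-- The operation `A ⊃ B` on propositions. -/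
def Frame.himp {W : Type*} (F : Frame W) (A B : Set W) : Set W :=
  {w | ∀ w', F.R w w' → w' ∈ A → w' ∈ B}

/-- The operation `KA = {w | A ∈ E(w)}` on propositions. -/
def Frame.kset {W : Type*} (F : Frame W) (A : Set W) : Set W :=
  {w | A ∈ F.E w}

/-- `w` is an `R`-maximal world. -/
def Frame.IsMaxW {W : Type*} (F : Frame W) (w : W) : Prop :=
  ∀ w', F.R w w' → w' = w

/-- The basic frame conditions (of an `EL5⁻`-frame, except for the designated
maximal world): `R` is a partial order with least element `wbot` in which every
`R`-chain has an upper bound; `P` consists of upper sets, contains `∅` and `W`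
and is closed under `∩`, `∪`, `⊃` and `K`; each `E(w)` is a filter on `P`; and
`E` is monotone. -/
def IsBaseFrame {W : Type*} (F : Frame W) : Prop :=
  (∀ w, F.R w w) ∧
  (∀ ⦃w w' w''⦄, F.R w w' → F.R w' w'' → F.R w w'') ∧
  (∀ ⦃w w'⦄, F.R w w' → F.R w' w → w = w') ∧
  (∀ w, F.R F.wbot w) ∧
  (∀ C : Set W, IsChain F.R C → ∃ ub, ∀ w ∈ C, F.R w ub) ∧
  (∀ A ∈ F.P, ∀ ⦃w w'⦄, F.R w w' → w ∈ A → w' ∈ A) ∧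
  (∅ : Set W) ∈ F.P ∧
  (Set.univ : Set W) ∈ F.P ∧
  (∀ A ∈ F.P, ∀ B ∈ F.P, A ∩ B ∈ F.P) ∧
  (∀ A ∈ F.P, ∀ B ∈ F.P, A ∪ B ∈ F.P) ∧
  (∀ A ∈ F.P, ∀ B ∈ F.P, F.himp A B ∈ F.P) ∧
  (∀ A ∈ F.P, F.kset A ∈ F.P) ∧
  (∀ w, F.E w ⊆ F.P) ∧
  (∀ w, (F.E w).Nonempty) ∧
  (∀ w, ∀ A ∈ F.E w, ∀ B ∈ F.E w, A ∩ B ∈ F.E w) ∧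
  (∀ w, ∀ A ∈ F.E w, ∀ B ∈ F.P, A ⊆ B → B ∈ F.E w) ∧
  (∀ ⦃w w'⦄, F.R w w' → F.E w ⊆ F.E w')

/-- The `E4L5⁻`-frame condition: `A ∈ E(w)` implies `KA ∈ E(w)`. -/
def E4Cond {W : Type*} (F : Frame W) : Prop :=
  ∀ w, ∀ A ∈ F.P, A ∈ F.E w → F.kset A ∈ F.E w

/-- The `E5L5⁻`-frame condition: if `A ∉ E(w')` for all `w' ≥ w`,
then `(KA ⊃ ∅) ∈ E(w)`. -/
def E5Cond {W : Type*} (F : Frame W) : Prop :=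
  ∀ w, ∀ A ∈ F.P, (∀ w', F.R w w' → A ∉ F.E w') → F.himp (F.kset A) ∅ ∈ F.E w

/-- The `E6L5⁻`-frame condition: `E` is constant, i.e. `E(w) = E(wbot)` for all `w`. -/
def E6Cond {W : Type*} (F : Frame W) : Prop :=
  ∀ w, F.E w = F.E F.wbot

/-- The knowledge condition of `EkL5`-frames: every believed proposition
contains all accessible maximal worlds. -/
def KnowCond {W : Type*} (F : Frame W) : Prop :=
  ∀ w, ∀ A ∈ F.E w, ∀ w', F.R w w' → F.IsMaxW w' → w' ∈ A

/-- The condition (IntCo) of intuitionistic co-reflection: `w ∈ A` implies `A ∈ E(w)`. -/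
def IntCoCond {W : Type*} (F : Frame W) : Prop :=
  ∀ w, ∀ A ∈ F.P, w ∈ A → A ∈ F.E w

/-- An `IEL⁻`-frame: the basic frame conditions (no designated maximal world)
together with (IntCo). -/
def IsIELmFrame {W : Type*} (F : Frame W) : Prop := IsBaseFrame F ∧ IntCoCond F

/-- An `IEL`-frame: an `IEL⁻`-frame in which every believed proposition contains
all accessible maximal worlds. -/
def IsIELFrame {W : Type*} (F : Frame W) : Prop := IsIELmFrame F ∧ KnowCond F

/-- A frame with a designated world `wT`. -/
structure EFrame (W : Type*) extends Frame W where
  wT : W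

/-- An `EL5⁻`-frame: the basic frame conditions together with maximality of the
designated world `wT`. -/
def IsEL5mFrame {W : Type*} (F : EFrame W) : Prop :=
  IsBaseFrame F.toFrame ∧ F.toFrame.IsMaxW F.wT
/-- Interpretation of formulas in a frame under an assignment `g`:
`interpFm F g φ` is the set `φ* = {w | w ⊨ φ}`. -/
def interpFm {W : Type*} (F : Frame W) (g : Nat → Set W) : Fm → Set W
  | .var n => g n
  | .bot => ∅
  | .and φ ψ => interpFm F g φ ∩ interpFm F g ψ
  | .or φ ψ => interpFm F g φ ∪ interpFm F g ψ
  | .imp φ ψ => F.himp (interpFm F g φ) (interpFm F g ψ)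
  | .box φ => {_w | F.wbot ∈ interpFm F g φ}
  | .k φ => {w | interpFm F g φ ∈ F.E w}

/-- Frames for the S5-style logic specified by `S` (one of `EL5⁻`, `EL5`,
`EkL5⁻`, `EkL5` for k ∈ {4,5,6}). -/
def IsFrameFor (S : LogicSpec) {W : Type*} (F : EFrame W) : Prop :=
  IsEL5mFrame F ∧
  (S.hasE4 → E4Cond F.toFrame) ∧
  (S.hasE5 → E5Cond F.toFrame) ∧
  (S.hasPNB ∧ S.hasNNB → E6Cond F.toFrame) ∧
  (S.hasIntRe → KnowCond F.toFrame)

/-!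
The relational model is the canonical one over the prime filters of `M`: worlds are prime
filters ordered by inclusion, the propositions are the Stone sets `{w | m ∈ w}`, and
`E(w) = {stone m | f_K m ∈ w}`. The prime filter theorem makes `m ↦ stone m` an embedding of
Heyting algebras, so it commutes with all connectives, and `stone (f_K m) = K (stone m)`.
In an `EL5⁻`-model `f_□` only takes the values `⊤` and `⊥`, and `M` is well-connected
(`{⊤}` is a prime filter); taking `{⊤}` as the least world makes `□` match as well. The
ultrafilter `TRUE` is a maximal world, and `γ(φ) ∈ TRUE ↔ TRUE ∈ stone (γ φ)`.
-/

section Filters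

variable {H : Type*} [HeytingAlgebra H] {F : Set H} {a b : H}

theorem IsHFilter.mem_of_le (hF : IsHFilter F) (ha : a ∈ F) (hab : a ≤ b) : b ∈ F :=
  hF.2.1 ha hab

theorem IsHFilter.inf_mem (hF : IsHFilter F) (ha : a ∈ F) (hb : b ∈ F) : a ⊓ b ∈ F :=
  hF.2.2 ha hb

theorem IsHFilter.top_mem (hF : IsHFilter F) : ⊤ ∈ F :=
  hF.mem_of_le hF.1.some_mem le_top

theorem IsProperHFilter.bot_not_mem (hF : IsProperHFilter F) : ⊥ ∉ F := fun h =>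
  hF.2 (Set.eq_univ_of_forall fun _ => hF.1.mem_of_le h bot_le)

theorem isHFilter_singleton_top : IsHFilter ({⊤} : Set H) := by
  refine ⟨Set.singleton_nonempty _, fun a b ha hab => ?_, fun a b ha hb => ?_⟩
  · exact top_le_iff.mp (ha ▸ hab)
  · rw [Set.mem_singleton_iff.mp ha, Set.mem_singleton_iff.mp hb, inf_top_eq]; rfl

theorem isPrimeHFilter_singleton_top (h : (⊥ : H) ≠ ⊤)
    (hsup : ∀ a b : H, a ⊔ b = ⊤ → a = ⊤ ∨ b = ⊤) : IsPrimeHFilter ({⊤} : Set H) :=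
  ⟨⟨isHFilter_singleton_top, fun huniv => h (Set.eq_univ_iff_forall.mp huniv ⊥)⟩, hsup⟩

theorem IsHFilter.exists_isPrimeHFilter (hF : IsHFilter F) (hb : b ∉ F) :
    ∃ G, IsPrimeHFilter G ∧ F ⊆ G ∧ b ∉ G := by
  let F' : Order.PFilter H := (Order.IsPFilter.of_def hF.1
    (fun x hx y hy => ⟨x ⊓ y, hF.inf_mem hx hy, inf_le_left, inf_le_right⟩)
    (fun hxy hx => hF.mem_of_le hx hxy)).toPFilter
  have hdisj : Disjoint (F' : Set H) (Order.Ideal.principal b : Set H) :=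
    Set.disjoint_left.mpr fun x hx hxb => hb (hF.mem_of_le hx hxb)
  obtain ⟨J, hJ, hbJ, hFJ⟩ := DistribLattice.prime_ideal_of_disjoint_filter_ideal hdisj
  refine ⟨(J : Set H)ᶜ, ⟨⟨⟨?_, ?_, ?_⟩, ?_⟩, ?_⟩, fun x hx => Set.disjoint_left.mp hFJ hx,
    fun hbJc => hbJc (hbJ Order.Ideal.mem_principal_self)⟩
  · exact ⟨⊤, hJ.top_notMem⟩
  · exact fun x y hx hxy hyJ => hx (J.lower hxy hyJ)
  · exact fun x y hx hy hxy => (hJ.mem_or_mem hxy).elim hx hy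
  · exact fun huniv => (huniv ▸ Set.mem_univ ⊥ : ⊥ ∈ (J : Set H)ᶜ) J.bot_mem
  · intro x y hxy
    by_contra! hxy'
    exact hxy (J.sup_mem (not_not.mp hxy'.1) (not_not.mp hxy'.2))

theorem IsHFilter.exists_isPrimeHFilter_of_himp_not_mem (hF : IsHFilter F) (hab : a ⇨ b ∉ F) :
    ∃ G, IsPrimeHFilter G ∧ F ⊆ G ∧ a ∈ G ∧ b ∉ G := by
  -- `{x | a ⇨ x ∈ F}` is the filter generated by `F ∪ {a}`.
  have hFa : IsHFilter {x | a ⇨ x ∈ F} :=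
    ⟨⟨⊤, by simpa using hF.top_mem⟩, fun x y hx hxy => hF.mem_of_le hx (himp_le_himp_left hxy),
      fun x y hx hy => by simpa only [Set.mem_ofPred_eq, himp_inf_distrib] using hF.inf_mem hx hy⟩
  obtain ⟨G, hG, hsub, hbG⟩ := hFa.exists_isPrimeHFilter hab
  exact ⟨G, hG, fun x hx => hsub (hF.mem_of_le hx le_himp),
    hsub (by simpa using hF.top_mem), hbG⟩

theorem IsUltraHFilter.isPrimeHFilter (hF : IsUltraHFilter F) : IsPrimeHFilter F := by
  obtain ⟨G, hG, hFG, -⟩ := hF.1.1.exists_isPrimeHFilter hF.1.bot_not_mem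
  rwa [hF.2 G hG.1 hFG] at hG

theorem isPrimeHFilter_sUnion {C : Set (Set H)} (hC : ∀ G ∈ C, IsPrimeHFilter G)
    (hchain : IsChain (· ⊆ ·) C) (hne : C.Nonempty) : IsPrimeHFilter (⋃₀ C) := by
  obtain ⟨G₀, hG₀⟩ := hne
  refine ⟨⟨⟨⟨⊤, G₀, hG₀, (hC G₀ hG₀).1.1.top_mem⟩, ?_, ?_⟩, ?_⟩, ?_⟩
  · rintro x y ⟨G, hG, hx⟩ hxy
    exact ⟨G, hG, (hC G hG).1.1.mem_of_le hx hxy⟩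
  · rintro x y ⟨G₁, hG₁, hx⟩ ⟨G₂, hG₂, hy⟩
    rcases hchain.total hG₁ hG₂ with h₁₂ | h₂₁
    · exact ⟨G₂, hG₂, (hC G₂ hG₂).1.1.inf_mem (h₁₂ hx) hy⟩
    · exact ⟨G₁, hG₁, (hC G₁ hG₁).1.1.inf_mem hx (h₂₁ hy)⟩
  · intro huniv
    obtain ⟨G, hG, hbot⟩ := (huniv ▸ Set.mem_univ ⊥ : ⊥ ∈ ⋃₀ C)
    exact (hC G hG).1.bot_not_mem hbot
  · rintro x y ⟨G, hG, hxy⟩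
    exact ((hC G hG).2 x y hxy).imp (⟨G, hG, ·⟩) (⟨G, hG, ·⟩)

end Filters

abbrev PrimeFilter (H : Type*) [HeytingAlgebra H] : Type _ := {F : Set H // IsPrimeHFilter F}

namespace PrimeFilter

variable {H : Type*} [HeytingAlgebra H] (w : PrimeFilter H) {a b : H}

theorem mem_of_le (ha : a ∈ w.1) (hab : a ≤ b) : b ∈ w.1 := w.2.1.1.mem_of_le ha hab

theorem inf_mem (ha : a ∈ w.1) (hb : b ∈ w.1) : a ⊓ b ∈ w.1 := w.2.1.1.inf_mem ha hb

theorem top_mem : ⊤ ∈ w.1 := w.2.1.1.top_mem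

theorem bot_not_mem : ⊥ ∉ w.1 := w.2.1.bot_not_mem

end PrimeFilter

section Stone

variable {H : Type*} [HeytingAlgebra H]

def stone (a : H) : Set (PrimeFilter H) := {w | a ∈ w.1}

theorem stone_subset_stone {a b : H} : stone a ⊆ stone b ↔ a ≤ b := by
  refine ⟨fun hab => ?_, fun hab w ha => w.mem_of_le ha hab⟩
  by_contra hnot
  obtain ⟨G, hG, -, haG, hbG⟩ := isHFilter_singleton_top.exists_isPrimeHFilter_of_himp_not_mem
    (mt himp_eq_top_iff.mp hnot)
  exact hbG (hab (show (⟨G, hG⟩ : PrimeFilter H) ∈ stone a from haG))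

theorem stone_bot : stone (⊥ : H) = ∅ :=
  Set.eq_empty_of_forall_notMem fun w => w.bot_not_mem

theorem stone_top : stone (⊤ : H) = Set.univ :=
  Set.eq_univ_of_forall fun w => w.top_mem

theorem stone_inf (a b : H) : stone (a ⊓ b) = stone a ∩ stone b := Set.ext fun w =>
  ⟨fun h => ⟨w.mem_of_le h inf_le_left, w.mem_of_le h inf_le_right⟩, fun h => w.inf_mem h.1 h.2⟩

theorem stone_sup (a b : H) : stone (a ⊔ b) = stone a ∪ stone b := Set.ext fun w =>
  ⟨w.2.2 a b, fun h => h.elim (w.mem_of_le · le_sup_left) (w.mem_of_le · le_sup_right)⟩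

end Stone

section NormalOperators

variable {H : Type*} [HeytingAlgebra H] {k : H → H}

theorem monotone_of_map_himp_le (hk_top : k ⊤ = ⊤)
    (hk : ∀ a b, k (a ⇨ b) ≤ k a ⇨ k b) : Monotone k := fun a b hab => by
  simpa [himp_eq_top_iff.mpr hab, hk_top] using hk a b

theorem inf_le_map_inf_of_map_himp_le (hk_top : k ⊤ = ⊤)
    (hk : ∀ a b, k (a ⇨ b) ≤ k a ⇨ k b) (a b : H) : k a ⊓ k b ≤ k (a ⊓ b) :=
  le_himp_iff.mp ((monotone_of_map_himp_le hk_top hk (le_himp_iff.mpr le_rfl)).trans (hk b _))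

end NormalOperators

section CanonicalFrame

variable {H : Type*} [HeytingAlgebra H] (k : H → H) (hbot : IsPrimeHFilter ({⊤} : Set H))

def canonicalFrame : Frame (PrimeFilter H) where
  R w w' := w.1 ⊆ w'.1
  P := Set.range stone
  E w := stone '' {a | k a ∈ w.1}
  wbot := ⟨{⊤}, hbot⟩

variable {k hbot}

theorem canonicalFrame_himp_stone (a b : H) :
    (canonicalFrame k hbot).himp (stone a) (stone b) = stone (a ⇨ b) := by
  ext w
  refine ⟨fun h => ?_, fun h w' hww' ha => w'.mem_of_le (w'.inf_mem (hww' h) ha) himp_inf_le⟩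
  by_contra hab
  obtain ⟨G, hG, hwG, haG, hbG⟩ := w.2.1.1.exists_isPrimeHFilter_of_himp_not_mem hab
  exact hbG (h ⟨G, hG⟩ hwG haG)

theorem stone_mem_canonicalFrame_E_iff (hk : Monotone k) (a : H) (w : PrimeFilter H) :
    stone a ∈ (canonicalFrame k hbot).E w ↔ k a ∈ w.1 := by
  refine ⟨?_, fun ha => ⟨a, ha, rfl⟩⟩
  rintro ⟨b, hb, hba⟩
  exact w.mem_of_le hb (hk (stone_subset_stone.mp hba.le))

theorem canonicalFrame_kset_stone (hk : Monotone k) (a : H) :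
    (canonicalFrame k hbot).kset (stone a) = stone (k a) :=
  Set.ext fun w => stone_mem_canonicalFrame_E_iff (hbot := hbot) hk a w

theorem canonicalFrame_exists_upperBound (C : Set (PrimeFilter H))
    (hC : IsChain (canonicalFrame k hbot).R C) : ∃ ub, ∀ w ∈ C, (canonicalFrame k hbot).R w ub := by
  rcases C.eq_empty_or_nonempty with rfl | hne
  · exact ⟨(canonicalFrame k hbot).wbot, by simp⟩
  refine ⟨⟨⋃₀ (Subtype.val '' C), isPrimeHFilter_sUnion ?_ ?_ (hne.image _)⟩,
    fun w hw => Set.subset_sUnion_of_mem ⟨w, hw, rfl⟩⟩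
  · rintro _ ⟨w, -, rfl⟩
    exact w.2
  · exact hC.image_of_map_rel _ (fun A B : Set H => A ⊆ B) Subtype.val fun _ _ => id

theorem canonicalFrame_isBaseFrame (hk : Monotone k) (hk_top : k ⊤ = ⊤)
    (hk_inf : ∀ a b, k a ⊓ k b ≤ k (a ⊓ b)) : IsBaseFrame (canonicalFrame k hbot) := by
  refine ⟨fun w => subset_rfl, fun _ _ _ h₁ h₂ => h₁.trans h₂,
    fun _ _ h₁ h₂ => Subtype.ext (h₁.antisymm h₂), ?_, canonicalFrame_exists_upperBound,
    ?_, ⟨⊥, stone_bot⟩, ⟨⊤, stone_top⟩, ?_, ?_, ?_, ?_, ?_, ?_, ?_, ?_, ?_⟩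
  · rintro w a rfl
    exact w.top_mem
  · rintro _ ⟨a, rfl⟩ w w' hww' ha
    exact hww' ha
  · rintro _ ⟨a, rfl⟩ _ ⟨b, rfl⟩
    exact ⟨a ⊓ b, stone_inf a b⟩
  · rintro _ ⟨a, rfl⟩ _ ⟨b, rfl⟩
    exact ⟨a ⊔ b, stone_sup a b⟩
  · rintro _ ⟨a, rfl⟩ _ ⟨b, rfl⟩
    exact ⟨a ⇨ b, (canonicalFrame_himp_stone a b).symm⟩
  · rintro _ ⟨a, rfl⟩
    exact ⟨k a, (canonicalFrame_kset_stone hk a).symm⟩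
  · rintro w _ ⟨a, -, rfl⟩
    exact ⟨a, rfl⟩
  · exact fun w => ⟨stone ⊤, ⊤, (hk_top.symm ▸ w.top_mem : k ⊤ ∈ w.1), rfl⟩
  · rintro w _ ⟨a, ha, rfl⟩ _ ⟨b, hb, rfl⟩
    exact ⟨a ⊓ b, w.mem_of_le (w.inf_mem ha hb) (hk_inf a b), stone_inf a b⟩
  · rintro w _ ⟨a, ha, rfl⟩ _ ⟨b, rfl⟩ hab
    exact ⟨b, w.mem_of_le ha (hk (stone_subset_stone.mp hab)), rfl⟩
  · rintro w w' hww' _ ⟨a, ha, rfl⟩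
    exact ⟨a, hww' ha, rfl⟩

theorem canonicalFrame_isMaxW {T : PrimeFilter H} (hT : IsUltraHFilter T.1) :
    (canonicalFrame k hbot).IsMaxW T :=
  fun w hTw => Subtype.ext (hT.2 w.1 w.2.1 hTw)

theorem canonicalFrame_e4Cond (hk : Monotone k) (h4 : ∀ a, k a ≤ k (k a)) :
    E4Cond (canonicalFrame k hbot) := by
  rintro w _ - ⟨a, ha, rfl⟩
  rw [canonicalFrame_kset_stone hk]
  exact ⟨k a, w.mem_of_le ha (h4 a), rfl⟩

theorem canonicalFrame_e5Cond (hk : Monotone k) (h5 : ∀ a, (k a ⇨ ⊥) ≤ k (k a ⇨ ⊥)) :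
    E5Cond (canonicalFrame k hbot) := by
  rintro w _ ⟨a, rfl⟩ hnot
  have hw : w ∈ (canonicalFrame k hbot).himp (stone (k a)) (stone ⊥) := fun w' hww' ha =>
    absurd ((stone_mem_canonicalFrame_E_iff hk a w').mpr ha) (hnot w' hww')
  rw [canonicalFrame_himp_stone] at hw
  rw [canonicalFrame_kset_stone hk, ← stone_bot, canonicalFrame_himp_stone]
  exact ⟨k a ⇨ ⊥, w.mem_of_le hw (h5 a), rfl⟩

theorem canonicalFrame_e6Cond (h6 : ∀ a, k a = ⊤ ∨ k a = ⊥) :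
    E6Cond (canonicalFrame k hbot) := by
  intro w
  suffices {a | k a ∈ w.1} = {a | k a ∈ ({⊤} : Set H)} from congrArg (stone '' ·) this
  ext a
  rcases h6 a with ha | ha <;> simp only [Set.mem_ofPred_eq, ha]
  · exact iff_of_true w.top_mem rfl
  · exact iff_of_false w.bot_not_mem hbot.1.bot_not_mem

theorem canonicalFrame_knowCond (hK : ∀ a, k a ≤ (a ⇨ ⊥) ⇨ ⊥) :
    KnowCond (canonicalFrame k hbot) := by
  rintro w _ ⟨a, ha, rfl⟩ w' hww' hmax
  have hnn : (a ⇨ ⊥) ⇨ ⊥ ∈ w'.1 := w'.mem_of_le (hww' ha) (hK a)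
  by_cases hna : a ⇨ ⊥ ∈ w'.1
  · exact absurd (w'.mem_of_le (w'.inf_mem hnn hna) himp_inf_le) w'.bot_not_mem
  · obtain ⟨G, hG, hw'G, haG, -⟩ := w'.2.1.1.exists_isPrimeHFilter_of_himp_not_mem hna
    exact hmax ⟨G, hG⟩ hw'G ▸ haG

end CanonicalFrame

section Models

variable {M : Type*} [HeytingAlgebra M] {Mdl : PreModel M}

theorem PreModel.fK_top (hbox_top : Mdl.fbox ⊤ = ⊤) (hA2 : ∀ m, Mdl.fbox m ≤ m)
    (hCoRe : ∀ m, Mdl.fbox m ≤ Mdl.fbox (Mdl.fK m)) : Mdl.fK ⊤ = ⊤ :=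
  top_le_iff.mp <| calc
    ⊤ = Mdl.fbox ⊤ := hbox_top.symm
    _ ≤ Mdl.fbox (Mdl.fK ⊤) := hCoRe ⊤
    _ ≤ Mdl.fK ⊤ := hA2 _

theorem PreModel.isPrimeHFilter_singleton_top (hT : IsPrimeHFilter Mdl.TRUE)
    (hA1 : ∀ m m', Mdl.fbox (m ⊔ m') ≤ Mdl.fbox m ⊔ Mdl.fbox m')
    (hbox : ∀ m, Mdl.fbox m ∈ Mdl.TRUE ↔ m = ⊤) : IsPrimeHFilter ({⊤} : Set M) := by
  refine _root_.isPrimeHFilter_singleton_top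
    (fun (h : (⊥ : M) = ⊤) => hT.1.bot_not_mem (h ▸ hT.1.1.top_mem)) fun a b hab => ?_
  have hsup := hT.1.1.mem_of_le ((hbox _).mpr hab) (hA1 a b)
  exact (hT.2 _ _ hsup).imp (hbox a).mp (hbox b).mp

theorem PreModel.fK_eq_top_or_eq_bot (hbox : ∀ m, m ≠ ⊤ → Mdl.fbox m = ⊥)
    (hPNB : ∀ m, Mdl.fK m ≤ Mdl.fbox (Mdl.fK m)) (a : M) : Mdl.fK a = ⊤ ∨ Mdl.fK a = ⊥ :=
  or_iff_not_imp_left.mpr fun ha => le_bot_iff.mp (hbox _ ha ▸ hPNB a)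

theorem interpFm_canonicalFrame (hbot : IsPrimeHFilter ({⊤} : Set M)) (hk : Monotone Mdl.fK)
    (hbox_top : Mdl.fbox ⊤ = ⊤) (hbox : ∀ m, m ≠ ⊤ → Mdl.fbox m = ⊥) (γ : Nat → M) (φ : Fm) :
    interpFm (canonicalFrame Mdl.fK hbot) (fun n => stone (γ n)) φ = stone (evalFm Mdl γ φ) := by
  induction φ with
  | var n => rfl
  | bot => exact stone_bot.symm
  | and φ ψ ihφ ihψ => rw [interpFm, evalFm, ihφ, ihψ, stone_inf]
  | or φ ψ ihφ ihψ => rw [interpFm, evalFm, ihφ, ihψ, stone_sup]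
  | imp φ ψ ihφ ihψ => rw [interpFm, evalFm, ihφ, ihψ, canonicalFrame_himp_stone]
  | k φ ih =>
    rw [interpFm, evalFm, ih]
    exact canonicalFrame_kset_stone hk _
  | box φ ih =>
    rw [interpFm, evalFm, ih]
    by_cases he : evalFm Mdl γ φ = ⊤
    · rw [he, hbox_top, stone_top]
      exact Set.eq_univ_of_forall fun _ => Set.mem_univ _
    · rw [hbox _ he, stone_bot]
      exact Set.eq_empty_of_forall_notMem fun _ h => he h

end Models

theorem hasKBel_and_hasCoRe_and_hasA5_of_mem_L5Logics {S : LogicSpec} (hS : S ∈ L5Logics) :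
    S.hasKBel ∧ S.hasCoRe ∧ S.hasA5 := by
  simp only [L5Logics, Set.mem_insert_iff, Set.mem_singleton_iff] at hS
  rcases hS with rfl | rfl | rfl | rfl | rfl | rfl | rfl | rfl <;>
    exact ⟨trivial, trivial, le_rfl⟩

/-- Let `𝓛 ∈ {EL5⁻, EL5, EkL5⁻, EkL5 | k ∈ {4,5,6}}` and let
`(M,γ)` be an algebraic `𝓛`-interpretation.  Then there is a relational model
`(F,g)` based on an `𝓛`-frame satisfying exactly the same formulas. -/
theorem stmt15 (S : LogicSpec) (hS : S ∈ L5Logics)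
    (M : Type) [HeytingAlgebra M] (Mdl : PreModel M) (γ : Nat → M)
    (h : IsModelFor S Mdl) :
    ∃ (W : Type) (F : EFrame W) (g : Nat → Set W),
      IsFrameFor S F ∧ (∀ n, g n ∈ F.P) ∧
      ∀ φ : Fm, (evalFm Mdl γ φ ∈ Mdl.TRUE ↔ F.wT ∈ interpFm F.toFrame g φ) := by
  obtain ⟨hKBel, hCoRe, hA5⟩ := hasKBel_and_hasCoRe_and_hasA5_of_mem_L5Logics hS
  obtain ⟨hTRUE, hA1, hA2, -, hbox_true, hKB, hCR, -, hbox, hE4, hE5, hPNB, -, hIntRe⟩ := h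
  obtain ⟨hbox_top, hbox_ne⟩ := hbox hA5
  have hk_top := PreModel.fK_top hbox_top hA2 (hCR hCoRe)
  have hk_himp := hKB hKBel
  have hk := monotone_of_map_himp_le hk_top hk_himp
  have hbot := PreModel.isPrimeHFilter_singleton_top hTRUE.isPrimeHFilter hA1 hbox_true
  refine ⟨PrimeFilter M, ⟨canonicalFrame Mdl.fK hbot, ⟨Mdl.TRUE, hTRUE.isPrimeHFilter⟩⟩,
    fun n => stone (γ n), ⟨⟨?_, canonicalFrame_isMaxW hTRUE⟩, ?_, ?_, ?_, ?_⟩,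
    fun n => ⟨γ n, rfl⟩, fun φ => ?_⟩
  · exact canonicalFrame_isBaseFrame hk hk_top (inf_le_map_inf_of_map_himp_le hk_top hk_himp)
  · exact fun h4 => canonicalFrame_e4Cond hk (hE4 h4)
  · exact fun h5 => canonicalFrame_e5Cond hk (hE5 h5)
  · exact fun h6 => canonicalFrame_e6Cond (PreModel.fK_eq_top_or_eq_bot hbox_ne (hPNB h6.1))
  · exact fun hIR => canonicalFrame_knowCond (hIntRe hIR)
  · rw [interpFm_canonicalFrame hbot hk hbox_top hbox_ne]
    rfl
end
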